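/- Fix 0 ≤ m < n and a real J_ave with J_{ave,m} ≤ J_ave < J_{ave,m+1}. Let a = (J_{m+1} − J_ave)/(J_{m+1} − J_{ave,m}) and define the jammer strategy ŷ by ŷ_0 = a·Z_m/Z_0, ŷ_j = a·Z_m·(Z_j^{−1} − Z_{j−1}^{−1}) for 1 ≤ j ≤ m, ŷ_{m+1} = (J_ave − J_{ave,m})/(J_{m+1} − J_{ave,m}), and ŷ_j = 0 for j > m+1. Then ŷ is a mixed strategy with average power Σ_{j=0}^n ŷ_j J_j = J_ave, and for every transmitter mixed strategy x, xᵀZŷ ≤ ((J_{m+1} − J_ave)/(J_{m+1} − J_{ave,m}))·Z_m. -/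

import Mathlib

open Finset

def IsMixed (n : ℕ) (x : ℕ → ℝ) : Prop :=
  (∀ i ∈ Finset.range (n + 1), 0 ≤ x i) ∧ ∑ i ∈ Finset.range (n + 1), x i = 1

/-- Expected payoff `xᵀ Z y` for the lower-triangular payoff matrix `Z(i,j) = Zᵢ` if `j ≤ i`,
`0` otherwise. -/
noncomputable def pay (n : ℕ) (Z : ℕ → ℝ) (x y : ℕ → ℝ) : ℝ :=
  ∑ i ∈ Finset.range (n + 1), ∑ j ∈ Finset.range (n + 1),
    x i * (if j ≤ i then Z i else 0) * y j

noncomputable def avgPow (n : ℕ) (J y : ℕ → ℝ) : ℝ :=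
  ∑ j ∈ Finset.range (n + 1), y j * J j

def YLE (n : ℕ) (J : ℕ → ℝ) (Jave : ℝ) (y : ℕ → ℝ) : Prop :=
  IsMixed n y ∧ avgPow n J y ≤ Jave

/-- The critical average jamming power `J_{ave,m} = Z_m ∑_{j=1}^m (Z_j⁻¹ - Z_{j-1}⁻¹) J_j`. -/
noncomputable def JaveM (m : ℕ) (J Z : ℕ → ℝ) : ℝ :=
  Z m * ∑ j ∈ Finset.Icc 1 m, ((Z j)⁻¹ - (Z (j - 1))⁻¹) * J j

/-!
The cumulative distribution of `ŷ` is `T_i = a Z_m / Z_i` for `i ≤ m` and `T_i = 1` for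
`i > m`, and `xᵀZŷ = ∑ᵢ xᵢ Z_i T_i`. So every pure strategy `i ≤ m` earns exactly `a Z_m`
against `ŷ`, while `i > m` earns `Z_i ≤ Z_{m+1}`, which is below `a Z_m` precisely because
`J_ave < J_{ave,m+1}`: the identity
`Z_m (J_{m+1} - J_{ave,m+1}) = Z_{m+1} (J_{m+1} - J_{ave,m})`
turns that inequality into `Z_{m+1} < a Z_m`.
-/

lemma mul_sub_JaveM_succ {J Z : ℕ → ℝ} {m : ℕ} (hZm : Z m ≠ 0) (hZm1 : Z (m + 1) ≠ 0) :
    Z m * (J (m + 1) - JaveM (m + 1) J Z) = Z (m + 1) * (J (m + 1) - JaveM m J Z) := by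
  unfold JaveM
  rw [sum_Icc_succ_top (Nat.le_add_left 1 m), Nat.add_sub_cancel]
  field_simp
  ring

lemma sub_JaveM_pos_of_JaveM_lt_succ {J Z : ℕ → ℝ} {m : ℕ} (hZm1 : 0 < Z (m + 1))
    (hZ : Z (m + 1) < Z m) (h : JaveM m J Z < JaveM (m + 1) J Z) :
    0 < J (m + 1) - JaveM m J Z := by
  have hZm := hZm1.trans hZ
  have hprod : (Z m - Z (m + 1)) * (J (m + 1) - JaveM m J Z) =
      Z m * (JaveM (m + 1) J Z - JaveM m J Z) := by
    linear_combination mul_sub_JaveM_succ (J := J) hZm.ne' hZm1.ne'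
  refine pos_of_mul_pos_right ?_ (sub_nonneg.mpr hZ.le)
  rw [hprod]
  exact mul_pos hZm (sub_pos.mpr h)

lemma lt_div_mul_of_lt_JaveM_succ {J Z : ℕ → ℝ} {m : ℕ} {c : ℝ} (hZm : 0 < Z m)
    (hZm1 : Z (m + 1) ≠ 0) (hD : 0 < J (m + 1) - JaveM m J Z) (hc : c < JaveM (m + 1) J Z) :
    Z (m + 1) < (J (m + 1) - c) / (J (m + 1) - JaveM m J Z) * Z m := by
  rw [div_mul_eq_mul_div, lt_div_iff₀ hD, ← mul_sub_JaveM_succ hZm.ne' hZm1, mul_comm _ (Z m)]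
  exact mul_lt_mul_of_pos_left (by linarith) hZm

lemma pay_eq_sum_mul_sum_range (n : ℕ) (Z x y : ℕ → ℝ) :
    pay n Z x y = ∑ i ∈ range (n + 1), x i * (Z i * ∑ j ∈ range (i + 1), y j) := by
  refine sum_congr rfl fun i hi => ?_
  have hfilter : (range (n + 1)).filter (· ≤ i) = range (i + 1) := by
    ext j
    simp only [mem_filter, mem_range] at hi ⊢
    omega
  simp only [mul_ite, ite_mul, mul_zero, zero_mul, sum_ite, sum_const_zero, add_zero, hfilter,
    mul_sum, mul_assoc]

lemma pay_le_of_forall_le {n : ℕ} {Z x y : ℕ → ℝ} {c : ℝ} (hx : IsMixed n x)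
    (h : ∀ i ≤ n, Z i * ∑ j ∈ range (i + 1), y j ≤ c) : pay n Z x y ≤ c :=
  calc pay n Z x y = ∑ i ∈ range (n + 1), x i * (Z i * ∑ j ∈ range (i + 1), y j) :=
        pay_eq_sum_mul_sum_range n Z x y
    _ ≤ ∑ i ∈ range (n + 1), x i * c := by
        refine sum_le_sum fun i hi => mul_le_mul_of_nonneg_left ?_ (hx.1 i hi)
        exact h i (Nat.lt_succ_iff.mp (mem_range.mp hi))
    _ = c := by rw [← sum_mul, hx.2, one_mul]

/-- The strategy `ŷ` of the statement, with `a` and the mass `b` at `m + 1` as parameters. -/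
noncomputable def jammerStrategy (m : ℕ) (Z : ℕ → ℝ) (a b : ℝ) (j : ℕ) : ℝ :=
  if j = 0 then a * Z m / Z 0
  else if j ≤ m then a * Z m * ((Z j)⁻¹ - (Z (j - 1))⁻¹)
  else if j = m + 1 then b
  else 0

section jammerStrategy

variable {m : ℕ} {Z : ℕ → ℝ} {a b : ℝ}

lemma jammerStrategy_eq_zero_of_lt {j : ℕ} (hj : m + 1 < j) : jammerStrategy m Z a b j = 0 := by
  rw [jammerStrategy, if_neg (by omega), if_neg (by omega), if_neg (by omega)]

lemma sum_range_jammerStrategy_of_le {i : ℕ} (hi : i ≤ m) :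
    ∑ j ∈ range (i + 1), jammerStrategy m Z a b j = a * Z m / Z i := by
  induction i with
  | zero => simp [jammerStrategy]
  | succ i ih =>
    rw [sum_range_succ, ih (by omega), jammerStrategy, if_neg (by omega), if_pos hi,
      Nat.add_sub_cancel]
    ring

lemma sum_range_jammerStrategy_of_lt (hZm : Z m ≠ 0) {i : ℕ} (hi : m < i) :
    ∑ j ∈ range (i + 1), jammerStrategy m Z a b j = a + b := by
  induction i, hi using Nat.le_induction with
  | base =>
    rw [sum_range_succ, sum_range_jammerStrategy_of_le le_rfl, mul_div_cancel_right₀ a hZm,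
      jammerStrategy, if_neg (by omega), if_neg (by omega), if_pos rfl]
  | succ i hi ih => rw [sum_range_succ, ih, jammerStrategy_eq_zero_of_lt (by omega), add_zero]

lemma jammerStrategy_nonneg (ha : 0 ≤ a) (hb : 0 ≤ b) (hZ : ∀ i ≤ m, 0 < Z i)
    (hZanti : AntitoneOn Z (Set.Iic m)) (j : ℕ) : 0 ≤ jammerStrategy m Z a b j := by
  have haZ : 0 ≤ a * Z m := mul_nonneg ha (hZ m le_rfl).le
  unfold jammerStrategy
  split_ifs with h0 hjm
  · exact div_nonneg haZ (hZ 0 (Nat.zero_le m)).le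
  · refine mul_nonneg haZ (sub_nonneg.mpr (inv_anti₀ (hZ j hjm) ?_))
    exact hZanti (show j - 1 ≤ m by omega) hjm (Nat.sub_le j 1)
  · exact hb
  · exact le_rfl

lemma isMixed_jammerStrategy {n : ℕ} (hmn : m < n) (ha : 0 ≤ a) (hb : 0 ≤ b) (hab : a + b = 1)
    (hZ : ∀ i ≤ m, 0 < Z i) (hZanti : AntitoneOn Z (Set.Iic m)) :
    IsMixed n (jammerStrategy m Z a b) :=
  ⟨fun j _ => jammerStrategy_nonneg ha hb hZ hZanti j,
    (sum_range_jammerStrategy_of_lt (hZ m le_rfl).ne' hmn).trans hab⟩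

lemma avgPow_jammerStrategy {n : ℕ} {J : ℕ → ℝ} (hJ0 : J 0 = 0) (hmn : m < n) :
    avgPow n J (jammerStrategy m Z a b) = a * JaveM m J Z + b * J (m + 1) := by
  have hsupp : avgPow n J (jammerStrategy m Z a b) =
      ∑ j ∈ range (m + 2), jammerStrategy m Z a b j * J j := by
    refine (sum_subset (range_subset_range.mpr (by omega)) fun j _ hj => ?_).symm
    rw [jammerStrategy_eq_zero_of_lt (by simp only [mem_range] at hj; omega), zero_mul]
  have hlow : ∑ j ∈ Icc 1 m, jammerStrategy m Z a b j * J j = a * JaveM m J Z := by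
    rw [JaveM, mul_sum, mul_sum]
    refine sum_congr rfl fun j hj => ?_
    obtain ⟨hj1, hjm⟩ := mem_Icc.mp hj
    rw [jammerStrategy, if_neg (by omega), if_pos hjm]
    ring
  rw [hsupp, sum_range_succ, Nat.range_succ_eq_Icc_zero,
    ← add_sum_Ioc_eq_sum_Icc (Nat.zero_le m), ← Icc_add_one_left_eq_Ioc, zero_add, hlow, hJ0,
    mul_zero, zero_add, jammerStrategy, if_neg (by omega), if_neg (by omega), if_pos rfl]

lemma pay_jammerStrategy_le {n : ℕ} {x : ℕ → ℝ} (hx : IsMixed n x) (hmn : m < n)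
    (hZ : ∀ i ≤ n, 0 < Z i) (hZanti : AntitoneOn Z (Set.Iic n)) (hab : a + b = 1)
    (haZ : Z (m + 1) ≤ a * Z m) : pay n Z x (jammerStrategy m Z a b) ≤ a * Z m := by
  refine pay_le_of_forall_le hx fun i hin => ?_
  rcases le_or_gt i m with him | hmi
  · rw [sum_range_jammerStrategy_of_le him, mul_div_cancel₀ _ (hZ i hin).ne']
  · rw [sum_range_jammerStrategy_of_lt (hZ m hmn.le).ne' hmi, hab, mul_one]
    exact (hZanti (show m + 1 ≤ n by omega) hin hmi).trans haZ

end jammerStrategy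

theorem stmt_8_general (n : ℕ) (J Z : ℕ → ℝ)
    (hJ0 : J 0 = 0)
    (hZanti : ∀ j < n, Z (j + 1) < Z j) (hZpos : 0 < Z n)
    (m : ℕ) (hm : m < n) (Jave : ℝ)
    (hJave1 : JaveM m J Z ≤ Jave) (hJave2 : Jave < JaveM (m + 1) J Z)
    (a : ℝ) (ha : a = (J (m + 1) - Jave) / (J (m + 1) - JaveM m J Z))
    (yhat : ℕ → ℝ)
    (hy : ∀ j, yhat j = if j = 0 then a * Z m / Z 0
      else if j ≤ m then a * Z m * ((Z j)⁻¹ - (Z (j - 1))⁻¹)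
      else if j = m + 1 then (Jave - JaveM m J Z) / (J (m + 1) - JaveM m J Z)
      else 0) :
    IsMixed n yhat ∧
    avgPow n J yhat = Jave ∧
    (∀ x : ℕ → ℝ, IsMixed n x →
      pay n Z x yhat ≤ (J (m + 1) - Jave) / (J (m + 1) - JaveM m J Z) * Z m) := by
  have hZantiOn : AntitoneOn Z (Set.Iic n) := (strictAntiOn_Iic_of_succ_lt hZanti).antitoneOn
  have hZ : ∀ i ≤ n, 0 < Z i := fun i hi =>
    hZpos.trans_le (hZantiOn hi (Set.mem_Iic.mpr le_rfl) hi)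
  have hZm := hZ m hm.le
  have hZm1 := hZ (m + 1) hm
  have hD := sub_JaveM_pos_of_JaveM_lt_succ hZm1 (hZanti m hm) (hJave1.trans_lt hJave2)
  have haZ : Z (m + 1) < a * Z m := ha ▸ lt_div_mul_of_lt_JaveM_succ hZm hZm1.ne' hD hJave2
  set b := (Jave - JaveM m J Z) / (J (m + 1) - JaveM m J Z) with hb
  have hab : a + b = 1 := by
    rw [ha, hb, ← add_div, div_eq_one_iff_eq hD.ne']
    ring
  obtain rfl : yhat = jammerStrategy m Z a b := funext hy
  refine ⟨isMixed_jammerStrategy hm ?_ (div_nonneg (sub_nonneg.mpr hJave1) hD.le) hab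
    (fun i hi => hZ i (hi.trans hm.le)) (hZantiOn.mono (Set.Iic_subset_Iic.mpr hm.le)), ?_,
    fun x hx => ha ▸ pay_jammerStrategy_le hx hm hZ hZantiOn hab haZ.le⟩
  · exact nonneg_of_mul_nonneg_left (hZm1.le.trans haZ.le) hZm
  · rw [avgPow_jammerStrategy hJ0 hm, ha, hb]
    field_simp
    ring

/-- for `0 ≤ m < n` and `J_{ave,m} ≤ J_ave < J_{ave,m+1}`, the strategy `ŷ`
(scaled by `a = (J_{m+1} - J_ave)/(J_{m+1} - J_{ave,m})` with extra mass at `m+1`) is a mixed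
strategy of average power exactly `J_ave`, forcing expected payoff at most `a Z_m`. -/
theorem stmt_8 (n : ℕ) (hn : 1 ≤ n) (J Z : ℕ → ℝ)
    (hJ0 : J 0 = 0) (hJmono : ∀ j < n, J j < J (j + 1))
    (hZanti : ∀ j < n, Z (j + 1) < Z j) (hZpos : 0 < Z n)
    (m : ℕ) (hm : m < n) (Jave : ℝ)
    (hJave1 : JaveM m J Z ≤ Jave) (hJave2 : Jave < JaveM (m + 1) J Z)
    (a : ℝ) (ha : a = (J (m + 1) - Jave) / (J (m + 1) - JaveM m J Z))
    (yhat : ℕ → ℝ)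
    (hy : ∀ j, yhat j = if j = 0 then a * Z m / Z 0
      else if j ≤ m then a * Z m * ((Z j)⁻¹ - (Z (j - 1))⁻¹)
      else if j = m + 1 then (Jave - JaveM m J Z) / (J (m + 1) - JaveM m J Z)
      else 0) :
    IsMixed n yhat ∧
    avgPow n J yhat = Jave ∧
    (∀ x : ℕ → ℝ, IsMixed n x →
      pay n Z x yhat ≤ (J (m + 1) - Jave) / (J (m + 1) - JaveM m J Z) * Z m) :=
  stmt_8_general n J Z hJ0 hZanti hZpos m hm Jave hJave1 hJave2 a ha yhat hy
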